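/- arXiv:math/9201225 — 4 statements merged into one kernel-verified Lean document; each statement's English description precedes it below -/
import Mathlib

section
/- The function g(x) = x / log₂(x+1) is concave on [1,∞). -/
open Real Set

noncomputable def hfun : ℝ → ℝ := fun x => x / Real.log (x + 1)

noncomputable def h1 : ℝ → ℝ := fun x =>
  (Real.log (x + 1) - x / (x + 1)) / (Real.log (x + 1)) ^ 2

lemma hasDerivAt_logx1 {x : ℝ} (hx : (0:ℝ) < x + 1) :
    HasDerivAt (fun y : ℝ => Real.log (y + 1)) (1 / (x + 1)) x := by
  have h := (Real.hasDerivAt_log (ne_of_gt hx)).comp x ((hasDerivAt_id x).add_const 1)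
  simp only [one_div]
  exact h.congr_deriv (by simp)

lemma hasDerivAt_hfun {x : ℝ} (hx : 1 < x) : HasDerivAt hfun (h1 x) x := by
  have hx1 : (0:ℝ) < x + 1 := by linarith
  have hL : 0 < Real.log (x + 1) := Real.log_pos (by linarith)
  have h := (hasDerivAt_id x).div (hasDerivAt_logx1 hx1) (ne_of_gt hL)
  refine h.congr_deriv ?_; symm; simp only [id]
  unfold h1
  field_simp

lemma hasDerivAt_h1 {x : ℝ} (hx : 1 < x) :
    HasDerivAt h1
      ((2 * x - (x + 2) * Real.log (x + 1)) / ((x + 1) ^ 2 * (Real.log (x + 1)) ^ 3)) x := by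
  have hx1 : (0:ℝ) < x + 1 := by linarith
  have hL : 0 < Real.log (x + 1) := Real.log_pos (by linarith)
  have dL := hasDerivAt_logx1 hx1
  -- derivative of x / (x+1)
  have dq : HasDerivAt (fun y : ℝ => y / (y + 1)) (1 / (x + 1) ^ 2) x := by
    have h := (hasDerivAt_id x).div ((hasDerivAt_id x).add_const 1) (ne_of_gt hx1)
    refine h.congr_deriv ?_; symm; simp only [id]
    field_simp
    ring
  have dnum : HasDerivAt (fun y : ℝ => Real.log (y + 1) - y / (y + 1))
      (1 / (x + 1) - 1 / (x + 1) ^ 2) x := dL.sub dq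
  have dden : HasDerivAt (fun y : ℝ => (Real.log (y + 1)) ^ 2)
      (2 * Real.log (x + 1) * (1 / (x + 1))) x := by
    have h := dL.pow 2
    refine h.congr_deriv ?_; symm
    ring
  have h := dnum.div dden (by positivity)
  refine h.congr_deriv ?_; symm
  field_simp
  ring

lemma key_ineq {t : ℝ} (ht : 1 ≤ t) : 2 * (t - 1) ≤ (t + 1) * Real.log t := by
  set F : ℝ → ℝ := fun t => (t + 1) * Real.log t - 2 * (t - 1) with hF
  have hder : ∀ x ∈ interior (Ici (1:ℝ)), HasDerivAt F (Real.log x + 1 / x - 1) x := by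
    intro x hx
    rw [interior_Ici] at hx
    have hx0 : (0:ℝ) < x := by have : (1:ℝ) < x := hx; linarith
    have d1 : HasDerivAt (fun y : ℝ => (y + 1) * Real.log y)
        (1 * Real.log x + (x + 1) * x⁻¹) x :=
      ((hasDerivAt_id x).add_const 1).mul (Real.hasDerivAt_log (ne_of_gt hx0))
    have d2 : HasDerivAt (fun y : ℝ => 2 * (y - 1)) 2 x := by
      have h := ((hasDerivAt_id x).sub_const 1).const_mul 2
      simpa using h
    have h := d1.sub d2
    refine h.congr_deriv ?_; symm
    field_simp
    ring
  have hmono : MonotoneOn F (Ici 1) := by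
    apply monotoneOn_of_deriv_nonneg (convex_Ici 1)
    · apply ContinuousOn.sub
      · exact (continuousOn_id.add continuousOn_const).mul
          (Real.continuousOn_log.mono (by intro x hx; simp at hx ⊢; linarith))
      · exact (continuousOn_const.mul (continuousOn_id.sub continuousOn_const))
    · intro x hx
      exact ((hder x hx).differentiableAt).differentiableWithinAt
    · intro x hx
      rw [(hder x hx).deriv]
      rw [interior_Ici] at hx
      have hx1 : (1:ℝ) < x := hx
      have hx0 : (0:ℝ) < x := by linarith
      have hlog : 1 - 1 / x ≤ Real.log x := by
        have h := Real.log_le_sub_one_of_pos (show (0:ℝ) < 1 / x by positivity)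
        rw [Real.log_div one_ne_zero (ne_of_gt hx0), Real.log_one] at h
        have : 1 / x ≤ x := by
          rw [div_le_iff₀ hx0]; nlinarith
        linarith
      linarith
  have := hmono (self_mem_Ici) (show t ∈ Ici (1:ℝ) from ht) ht
  simp only [hF, Real.log_one] at this
  linarith

lemma hfun_concave : ConcaveOn ℝ (Ici 1) hfun := by
  have hIoi : interior (Ici (1:ℝ)) = Ioi 1 := interior_Ici
  have hderiv_eq : ∀ x ∈ Ioi (1:ℝ), deriv hfun x = h1 x := fun x hx =>
    (hasDerivAt_hfun hx).deriv
  apply concaveOn_of_deriv2_nonpos (convex_Ici 1)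
  · -- ContinuousOn
    apply ContinuousOn.div continuousOn_id
    · intro x hx
      have hx1 : (1:ℝ) ≤ x := hx
      exact ((Real.continuousAt_log (by norm_num; linarith)).comp
        (by fun_prop : ContinuousAt (fun y : ℝ => y + 1) x)).continuousWithinAt
    · intro x hx
      have hx1 : (1:ℝ) ≤ x := hx
      exact ne_of_gt (Real.log_pos (by linarith))
  · rw [hIoi]
    intro x hx
    exact (hasDerivAt_hfun hx).differentiableAt.differentiableWithinAt
  · rw [hIoi]
    intro x hx
    have heq : deriv hfun =ᶠ[nhds x] h1 := by
      filter_upwards [isOpen_Ioi.mem_nhds hx] with y hy using hderiv_eq y hy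
    exact ((hasDerivAt_h1 hx).differentiableAt.congr_of_eventuallyEq heq).differentiableWithinAt
  · rw [hIoi]
    intro x hx
    have hx1 : (1:ℝ) < x := hx
    have hL : 0 < Real.log (x + 1) := Real.log_pos (by linarith)
    have heq : deriv hfun =ᶠ[nhds x] h1 := by
      filter_upwards [isOpen_Ioi.mem_nhds hx] with y hy using hderiv_eq y hy
    have : deriv (deriv hfun) x = deriv h1 x := heq.deriv_eq
    have h2 : deriv h1 x =
        (2 * x - (x + 2) * Real.log (x + 1)) / ((x + 1) ^ 2 * (Real.log (x + 1)) ^ 3) :=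
      (hasDerivAt_h1 hx).deriv
    show deriv^[2] hfun x ≤ 0
    rw [Function.iterate_succ, Function.iterate_one, Function.comp_apply, this, h2]
    apply div_nonpos_of_nonpos_of_nonneg
    · have := key_ineq (t := x + 1) (by linarith)
      nlinarith
    · positivity

theorem stmt3 :
    ConcaveOn ℝ (Set.Ici 1) (fun x : ℝ => x / Real.logb 2 (x + 1)) := by
  have heq : (fun x : ℝ => x / Real.logb 2 (x + 1)) =
      fun x : ℝ => Real.log 2 • hfun x := by
    funext x
    simp only [Real.logb, smul_eq_mul, hfun, div_div_eq_mul_div]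
    ring
  rw [heq]
  exact hfun_concave.smul (le_of_lt (Real.log_pos (by norm_num)))
end

section
/- For all x, y ≥ 1, log₂(x+1) · log₂(y+1) ≥ log₂(x·y + 1). -/
lemma key_aux (a b : ℝ) (ha : 1 ≤ a) (hb : 1 ≤ b) :
    ((2:ℝ) ^ a - 1) * ((2:ℝ) ^ b - 1) + 1 ≤ (2:ℝ) ^ (a * b) := by
  set L := Real.log 2 with hLdef
  have hL0 : 0 < L := Real.log_pos (by norm_num)
  have hL1 : L ≤ 1 := by
    have := Real.log_le_sub_one_of_pos (x := 2) (by norm_num)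
    linarith
  set s := a - 1 with hs'
  set t := b - 1 with ht'
  have hs : 0 ≤ s := by simp [hs']; linarith
  have ht : 0 ≤ t := by simp [ht']; linarith
  set u := (2:ℝ) ^ s with hu'
  set v := (2:ℝ) ^ t with hv'
  set w := (2:ℝ) ^ (s * t) with hw'
  have hu1 : 1 ≤ u := Real.one_le_rpow (by norm_num) hs
  have hv1 : 1 ≤ v := Real.one_le_rpow (by norm_num) ht
  have h2a : (2:ℝ) ^ a = 2 * u := by
    rw [hu', show a = s + 1 by rw [hs']; ring, Real.rpow_add (by norm_num), Real.rpow_one]; ring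
  have h2b : (2:ℝ) ^ b = 2 * v := by
    rw [hv', show b = t + 1 by rw [ht']; ring, Real.rpow_add (by norm_num), Real.rpow_one]; ring
  have h2ab : (2:ℝ) ^ (a * b) = 2 * (u * v * w) := by
    rw [hu', hv', hw', show a * b = s + (t + (s * t + 1)) by rw [hs', ht']; ring,
      Real.rpow_add (by norm_num), Real.rpow_add (by norm_num), Real.rpow_add (by norm_num),
      Real.rpow_one]
    ring
  rw [h2a, h2b, h2ab]
  -- exp bounds
  have hwL : 1 + s * t * L ≤ w := by
    rw [hw', Real.rpow_def_of_pos (by norm_num)]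
    have := Real.add_one_le_exp (L * (s * t))
    calc 1 + s * t * L = L * (s * t) + 1 := by ring
      _ ≤ Real.exp (L * (s * t)) := Real.add_one_le_exp _
  have huL : u - u * s * L ≤ 1 := by
    have h1 : 1 - s * L ≤ (2:ℝ) ^ (-s) := by
      rw [Real.rpow_def_of_pos (by norm_num)]
      have := Real.add_one_le_exp (L * (-s))
      calc 1 - s * L = L * (-s) + 1 := by ring
        _ ≤ Real.exp (L * (-s)) := Real.add_one_le_exp _
    have h2 : u * (1 - s * L) ≤ u * (2:ℝ) ^ (-s) :=
      mul_le_mul_of_nonneg_left h1 (by linarith)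
    have h3 : u * (2:ℝ) ^ (-s) = 1 := by
      rw [hu', ← Real.rpow_add (by norm_num)]; simp
    nlinarith
  have hvL : v - v * t * L ≤ 1 := by
    have h1 : 1 - t * L ≤ (2:ℝ) ^ (-t) := by
      rw [Real.rpow_def_of_pos (by norm_num)]
      calc 1 - t * L = L * (-t) + 1 := by ring
        _ ≤ Real.exp (L * (-t)) := Real.add_one_le_exp _
    have h2 : v * (1 - t * L) ≤ v * (2:ℝ) ^ (-t) :=
      mul_le_mul_of_nonneg_left h1 (by linarith)
    have h3 : v * (2:ℝ) ^ (-t) = 1 := by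
      rw [hv', ← Real.rpow_add (by norm_num)]; simp
    nlinarith
  -- main algebraic chain
  have step1 : (u - 1) * (v - 1) ≤ (u * s * L) * (v * t * L) := by
    apply mul_le_mul (by linarith) (by linarith) (by linarith)
    positivity
  have step2 : (u * s * L) * (v * t * L) ≤ u * v * (s * t * L) := by
    have h : (u * s * L) * (v * t * L) = (u * v * (s * t * L)) * L := by ring
    rw [h]
    nlinarith [mul_nonneg (mul_nonneg (by positivity : (0:ℝ) ≤ u * v)
      (mul_nonneg (mul_nonneg hs ht) hL0.le)) (by linarith : (0:ℝ) ≤ 1 - L)]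
  have step3 : u * v * (s * t * L) ≤ u * v * (w - 1) := by
    apply mul_le_mul_of_nonneg_left (by linarith) (by nlinarith)
  nlinarith [step1, step2, step3]

theorem stmt4 (x y : ℝ) (hx : 1 ≤ x) (hy : 1 ≤ y) :
    Real.logb 2 (x * y + 1) ≤ Real.logb 2 (x + 1) * Real.logb 2 (y + 1) := by
  have hx0 : (0:ℝ) < x + 1 := by linarith
  have hy0 : (0:ℝ) < y + 1 := by linarith
  have hxy0 : (0:ℝ) < x * y + 1 := by nlinarith
  set a := Real.logb 2 (x + 1) with ha
  set b := Real.logb 2 (y + 1) with hb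
  have ha1 : 1 ≤ a := by
    have h := Real.logb_le_logb_of_le (b := 2) (x := 2) (one_lt_two) (by norm_num) (by linarith : (2:ℝ) ≤ x + 1)
    simpa [ha] using h
  have hb1 : 1 ≤ b := by
    have h := Real.logb_le_logb_of_le (b := 2) (x := 2) (one_lt_two) (by norm_num) (by linarith : (2:ℝ) ≤ y + 1)
    simpa [hb] using h
  have hxa : x + 1 = (2:ℝ) ^ a := (Real.rpow_logb (by norm_num) (by norm_num) hx0).symm
  have hyb : y + 1 = (2:ℝ) ^ b := (Real.rpow_logb (by norm_num) (by norm_num) hy0).symm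
  rw [Real.logb_le_iff_le_rpow (by norm_num) hxy0]
  have := key_aux a b ha1 hb1
  have hx' : x = (2:ℝ) ^ a - 1 := by linarith
  have hy' : y = (2:ℝ) ^ b - 1 := by linarith
  rw [hx', hy']
  linarith
end

section
/- Let f : [1,∞) → [1,∞) satisfy: g(x) = x/f(x) is concave on [1,∞), and f(x)·f(y) ≥ f(x·y) for all x,y ≥ 1. Then for any ℓ ≥ 1 and positive integers n₁,…,n_ℓ with n₁+⋯+n_ℓ = n, one has (1/f(ℓ))·Σᵢ nᵢ/f(nᵢ) ≤ n/f(n). -/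
theorem stmt5 (f : ℝ → ℝ) (hf1 : ∀ x : ℝ, 1 ≤ x → 1 ≤ f x)
    (hconc : ConcaveOn ℝ (Set.Ici 1) (fun x : ℝ => x / f x))
    (hsub : ∀ x y : ℝ, 1 ≤ x → 1 ≤ y → f (x * y) ≤ f x * f y)
    (l : ℕ) (hl : 1 ≤ l) (n : Fin l → ℕ) (hn : ∀ i, 1 ≤ n i) :
    (1 / f l) * ∑ i, (n i : ℝ) / f (n i) ≤
      (∑ i, (n i : ℝ)) / f (∑ i, (n i : ℝ)) := by
  set N : ℝ := ∑ i, (n i : ℝ) with hN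
  have hL : (1:ℝ) ≤ (l:ℝ) := by exact_mod_cast hl
  have hLpos : (0:ℝ) < l := lt_of_lt_of_le zero_lt_one hL
  have hni : ∀ i, (1:ℝ) ≤ (n i : ℝ) := fun i => by exact_mod_cast hn i
  have hNL : (l:ℝ) ≤ N := by
    calc (l:ℝ) = ∑ _i : Fin l, (1:ℝ) := by simp
    _ ≤ N := Finset.sum_le_sum fun i _ => hni i
  have hN1 : (1:ℝ) ≤ N := le_trans hL hNL
  have hNLdiv : (1:ℝ) ≤ N / l := (one_le_div hLpos).mpr hNL
  -- Jensen
  have hjen : ∑ i : Fin l, ((l:ℝ)⁻¹) • ((fun x : ℝ => x / f x) (n i)) ≤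
      (fun x : ℝ => x / f x) (∑ i : Fin l, ((l:ℝ)⁻¹) • ((n i : ℝ))) :=
    hconc.le_map_sum (fun i _ => by positivity)
      (by simp [Finset.sum_const]; field_simp)
      (fun i _ => hni i)
  have hsum : ∑ i : Fin l, ((l:ℝ)⁻¹) • ((n i : ℝ)) = N / l := by
    rw [← Finset.smul_sum]; simp [hN, smul_eq_mul, div_eq_inv_mul]
  rw [hsum] at hjen
  simp only [smul_eq_mul, ← Finset.mul_sum] at hjen
  have hjen2 : ∑ i, (n i : ℝ) / f (n i) ≤ N / f (N / l) := by
    have := mul_le_mul_of_nonneg_left hjen (le_of_lt hLpos)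
    rw [← mul_assoc, mul_inv_cancel₀ (ne_of_gt hLpos), one_mul] at this
    calc ∑ i, (n i : ℝ) / f (n i) ≤ (l:ℝ) * (N / l / f (N / l)) := this
    _ = N / f (N / l) := by
        field_simp
  -- submultiplicativity: f N ≤ f l * f (N/l)
  have hfsub : f N ≤ f l * f (N / l) := by
    have := hsub l (N / l) hL hNLdiv
    rwa [mul_div_cancel₀ _ (ne_of_gt hLpos)] at this
  have hfl : (0:ℝ) < f l := lt_of_lt_of_le zero_lt_one (hf1 _ hL)
  have hfN : (0:ℝ) < f N := lt_of_lt_of_le zero_lt_one (hf1 _ hN1)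
  have hfNL : (0:ℝ) < f (N / l) := lt_of_lt_of_le zero_lt_one (hf1 _ hNLdiv)
  have hNpos : (0:ℝ) ≤ N := le_trans zero_le_one hN1
  calc (1 / f l) * ∑ i, (n i : ℝ) / f (n i) ≤ (1 / f l) * (N / f (N / l)) := by
        apply mul_le_mul_of_nonneg_left hjen2; positivity
    _ = N / (f l * f (N / l)) := by rw [div_mul_div_comm, one_mul]
    _ ≤ N / f N := div_le_div_of_nonneg_left hNpos hfN hfsub
end

section
/- The norm ‖x‖ = sup_k |x|_k on c₀₀ (with |·|_k the inductively defined norms of Schlumprecht's space) satisfies the implicit equation ‖x‖ = max{ |x|₀ , sup over ℓ ≥ 2 and E₁ < E₂ < ⋯ < E_ℓ of (1/f(ℓ))·Σᵢ ‖Eᵢ(x)‖ }. -/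
open scoped Classical

noncomputable def f (l : ℕ) : ℝ := Real.logb 2 (l + 1)

/-- `E₁ < E₂ < ⋯` : the finite sets are successive. -/
def Succ {l : ℕ} (E : Fin l → Finset ℕ) : Prop :=
  ∀ i j : Fin l, i < j → ∀ a ∈ E i, ∀ b ∈ E j, a < b

/-- Restriction `E(x)` of `x` to the finite set `E`. -/
noncomputable def restr (x : ℕ →₀ ℝ) (E : Finset ℕ) : ℕ →₀ ℝ :=
  x.filter (· ∈ E)

/-- The inductively defined norms `|·|_k`. -/
noncomputable def normK : ℕ → (ℕ →₀ ℝ) → ℝ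
  | 0, x => ⨆ n, |x n|
  | k + 1, x => ⨆ l : ℕ, ⨆ E : Fin (l + 1) → Finset ℕ,
      if Succ E then (1 / f (l + 1)) * ∑ i, normK k (restr x (E i)) else 0

/-- The Schlumprecht norm `‖x‖ = sup_k |x|_k`. -/
noncomputable def S (x : ℕ →₀ ℝ) : ℝ := ⨆ k, normK k x

/-- The right-hand side of the implicit equation for a functional `N` on `c₀₀`. -/
noncomputable def implicitRHS (N : (ℕ →₀ ℝ) → ℝ) (x : ℕ →₀ ℝ) : ℝ :=
  max (⨆ n, |x n|)
    (⨆ l : ℕ, ⨆ E : Fin l → Finset ℕ,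
      if 2 ≤ l ∧ Succ E then (1 / f l) * ∑ i, N (restr x (E i)) else 0)

/-! ### Auxiliary lemmas -/

noncomputable def L1 (x : ℕ →₀ ℝ) : ℝ := ∑ n ∈ x.support, |x n|

lemma L1_nonneg (x : ℕ →₀ ℝ) : 0 ≤ L1 x :=
  Finset.sum_nonneg fun _ _ => abs_nonneg _

lemma abs_le_L1 (x : ℕ →₀ ℝ) (n : ℕ) : |x n| ≤ L1 x := by
  by_cases h : n ∈ x.support
  · exact Finset.single_le_sum (f := fun m => |x m|) (fun i _ => abs_nonneg _) h
  · rw [Finsupp.notMem_support_iff.mp h]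
    simpa using L1_nonneg x

lemma restr_apply (x : ℕ →₀ ℝ) (E : Finset ℕ) (n : ℕ) :
    restr x E n = if n ∈ E then x n else 0 := by
  simp [restr, Finsupp.filter_apply]

lemma restr_restr (x : ℕ →₀ ℝ) (E F : Finset ℕ) :
    restr (restr x E) F = restr x (F ∩ E) := by
  ext n
  simp only [restr_apply, Finset.mem_inter]
  by_cases h1 : n ∈ F <;> by_cases h2 : n ∈ E <;> simp [h1, h2]

lemma restr_support_eq (x : ℕ →₀ ℝ) : restr x x.support = x := by
  ext n
  rw [restr_apply]
  by_cases h : n ∈ x.support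
  · simp [h]
  · simp [h, Finsupp.notMem_support_iff.mp h]

lemma one_le_f {l : ℕ} (hl : 1 ≤ l) : 1 ≤ f l := by
  have : ((2 : ℝ)) ≤ (l : ℝ) + 1 := by
    have : (1 : ℝ) ≤ (l : ℝ) := by exact_mod_cast hl
    linarith
  calc (1 : ℝ) = Real.logb 2 2 := (Real.logb_self_eq_one (by norm_num)).symm
  _ ≤ Real.logb 2 ((l : ℝ) + 1) := Real.logb_le_logb_of_le (by norm_num) (by norm_num) this

lemma f_pos {l : ℕ} (hl : 1 ≤ l) : 0 < f l := lt_of_lt_of_le one_pos (one_le_f hl)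

lemma one_div_f_le_one {l : ℕ} (hl : 1 ≤ l) : 1 / f l ≤ 1 := by
  rw [div_le_one (f_pos hl)]; exact one_le_f hl

lemma one_div_f_pos {l : ℕ} (hl : 1 ≤ l) : 0 < 1 / f l :=
  div_pos one_pos (f_pos hl)

/-- Successive sets restricted sums are bounded by `L1 x`. -/
lemma sum_L1_restr_le {l : ℕ} (x : ℕ →₀ ℝ) (E : Fin l → Finset ℕ) (hE : Succ E) :
    ∑ i, L1 (restr x (E i)) ≤ L1 x := by
  have hsupp : ∀ i, (restr x (E i)).support = x.support.filter (· ∈ E i) := by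
    intro i
    ext n
    simp [restr, Finsupp.support_filter, Finset.mem_filter]
  have hterm : ∀ i, L1 (restr x (E i)) = ∑ n ∈ x.support.filter (· ∈ E i), |x n| := by
    intro i
    rw [L1, hsupp i]
    refine Finset.sum_congr rfl fun n hn => ?_
    rw [Finset.mem_filter] at hn
    rw [restr_apply, if_pos hn.2]
  have hdisj : (↑(Finset.univ : Finset (Fin l)) : Set (Fin l)).PairwiseDisjoint
      (fun i => x.support.filter (· ∈ E i)) := by
    intro i _ j _ hij
    rcases lt_or_gt_of_ne hij with h | h
    · refine Finset.disjoint_left.mpr fun a ha hb => ?_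
      rw [Finset.mem_filter] at ha hb
      exact lt_irrefl a (hE i j h a ha.2 a hb.2)
    · refine Finset.disjoint_left.mpr fun a ha hb => ?_
      rw [Finset.mem_filter] at ha hb
      exact lt_irrefl a (hE j i h a hb.2 a ha.2)
  calc ∑ i, L1 (restr x (E i))
      = ∑ i, ∑ n ∈ x.support.filter (· ∈ E i), |x n| := by
        exact Finset.sum_congr rfl fun i _ => hterm i
    _ = ∑ n ∈ Finset.univ.biUnion (fun i => x.support.filter (· ∈ E i)), |x n| :=
        (Finset.sum_biUnion hdisj).symm
    _ ≤ ∑ n ∈ x.support, |x n| := by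
        refine Finset.sum_le_sum_of_subset_of_nonneg ?_ (fun n _ _ => abs_nonneg _)
        intro n hn
        rw [Finset.mem_biUnion] at hn
        obtain ⟨i, _, hi⟩ := hn
        exact (Finset.mem_filter.mp hi).1
  -- done

lemma normK_bounds (k : ℕ) : ∀ x : ℕ →₀ ℝ, 0 ≤ normK k x ∧ normK k x ≤ L1 x := by
  induction k with
  | zero =>
    intro x
    have hb : BddAbove (Set.range fun n => |x n|) := by
      refine ⟨L1 x, ?_⟩
      rintro _ ⟨n, rfl⟩
      exact abs_le_L1 x n
    constructor
    · exact le_trans (abs_nonneg (x 0)) (le_ciSup hb 0)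
    · exact ciSup_le fun n => abs_le_L1 x n
  | succ k ih =>
    intro x
    -- bound each term
    have hub : ∀ (l : ℕ) (E : Fin (l + 1) → Finset ℕ),
        (if Succ E then (1 / f (l + 1)) * ∑ i, normK k (restr x (E i)) else 0) ≤ L1 x := by
      intro l E
      split_ifs with h
      · have hsum : ∑ i, normK k (restr x (E i)) ≤ L1 x := by
          calc ∑ i, normK k (restr x (E i)) ≤ ∑ i, L1 (restr x (E i)) :=
                Finset.sum_le_sum fun i _ => (ih (restr x (E i))).2
            _ ≤ L1 x := sum_L1_restr_le x E h
        have hnn : 0 ≤ ∑ i, normK k (restr x (E i)) :=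
          Finset.sum_nonneg fun i _ => (ih (restr x (E i))).1
        calc (1 / f (l + 1)) * ∑ i, normK k (restr x (E i))
            ≤ 1 * ∑ i, normK k (restr x (E i)) := by
              exact mul_le_mul_of_nonneg_right (one_div_f_le_one (by omega)) hnn
          _ = ∑ i, normK k (restr x (E i)) := one_mul _
          _ ≤ L1 x := hsum
      · exact L1_nonneg x
    have hbE : ∀ l : ℕ, BddAbove (Set.range fun E : Fin (l + 1) → Finset ℕ =>
        if Succ E then (1 / f (l + 1)) * ∑ i, normK k (restr x (E i)) else 0) := by
      intro l
      exact ⟨L1 x, by rintro _ ⟨E, rfl⟩; exact hub l E⟩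
    have hbl : BddAbove (Set.range fun l : ℕ => ⨆ E : Fin (l + 1) → Finset ℕ,
        if Succ E then (1 / f (l + 1)) * ∑ i, normK k (restr x (E i)) else 0) := by
      refine ⟨L1 x, ?_⟩
      rintro _ ⟨l, rfl⟩
      exact ciSup_le fun E => hub l E
    constructor
    · -- nonneg : use l = 0, E = fun _ => ∅
      have h0 : Succ (fun _ : Fin 1 => (∅ : Finset ℕ)) := by
        intro i j hij
        simp
      have hval : (0 : ℝ) ≤ if Succ (fun _ : Fin 1 => (∅ : Finset ℕ)) then
          (1 / f (0 + 1)) * ∑ i : Fin 1, normK k (restr x ((fun _ => ∅) i)) else 0 := by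
        rw [if_pos h0]
        refine mul_nonneg (le_of_lt (one_div_f_pos (by omega))) ?_
        exact Finset.sum_nonneg fun i _ => (ih _).1
      show (0:ℝ) ≤ ⨆ l : ℕ, ⨆ E : Fin (l + 1) → Finset ℕ,
        if Succ E then (1 / f (l + 1)) * ∑ i, normK k (restr x (E i)) else 0
      refine le_trans hval ?_
      refine le_trans (le_ciSup (hbE 0) (fun _ : Fin 1 => (∅ : Finset ℕ))) ?_
      exact le_ciSup hbl 0
    · show (⨆ l : ℕ, ⨆ E : Fin (l + 1) → Finset ℕ,
        if Succ E then (1 / f (l + 1)) * ∑ i, normK k (restr x (E i)) else 0) ≤ L1 x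
      exact ciSup_le fun l => ciSup_le fun E => hub l E

lemma normK_nonneg (k : ℕ) (x : ℕ →₀ ℝ) : 0 ≤ normK k x := (normK_bounds k x).1

lemma normK_le_L1 (k : ℕ) (x : ℕ →₀ ℝ) : normK k x ≤ L1 x := (normK_bounds k x).2

lemma bddAbove_inner (k l : ℕ) (x : ℕ →₀ ℝ) :
    BddAbove (Set.range fun E : Fin (l + 1) → Finset ℕ =>
      if Succ E then (1 / f (l + 1)) * ∑ i, normK k (restr x (E i)) else 0) := by
  refine ⟨L1 x, ?_⟩
  rintro _ ⟨E, rfl⟩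
  dsimp only
  split_ifs with h
  · have hsum : ∑ i, normK k (restr x (E i)) ≤ L1 x :=
      le_trans (Finset.sum_le_sum fun i _ => normK_le_L1 k _) (sum_L1_restr_le x E h)
    have hnn : 0 ≤ ∑ i, normK k (restr x (E i)) :=
      Finset.sum_nonneg fun i _ => normK_nonneg k _
    calc (1 / f (l + 1)) * ∑ i, normK k (restr x (E i))
        ≤ 1 * ∑ i, normK k (restr x (E i)) :=
          mul_le_mul_of_nonneg_right (one_div_f_le_one (by omega)) hnn
      _ = _ := one_mul _
      _ ≤ L1 x := hsum
  · exact L1_nonneg x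

lemma bddAbove_outer (k : ℕ) (x : ℕ →₀ ℝ) :
    BddAbove (Set.range fun l : ℕ => ⨆ E : Fin (l + 1) → Finset ℕ,
      if Succ E then (1 / f (l + 1)) * ∑ i, normK k (restr x (E i)) else 0) := by
  refine ⟨L1 x, ?_⟩
  rintro _ ⟨l, rfl⟩
  refine ciSup_le fun E => ?_
  split_ifs with h
  · have hsum : ∑ i, normK k (restr x (E i)) ≤ L1 x :=
      le_trans (Finset.sum_le_sum fun i _ => normK_le_L1 k _) (sum_L1_restr_le x E h)
    have hnn : 0 ≤ ∑ i, normK k (restr x (E i)) :=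
      Finset.sum_nonneg fun i _ => normK_nonneg k _
    calc (1 / f (l + 1)) * ∑ i, normK k (restr x (E i))
        ≤ 1 * ∑ i, normK k (restr x (E i)) :=
          mul_le_mul_of_nonneg_right (one_div_f_le_one (by omega)) hnn
      _ = _ := one_mul _
      _ ≤ L1 x := hsum
  · exact L1_nonneg x

/-- Key access lemma: every admissible term is below `normK (k+1) x`. -/
lemma term_le_normK_succ (k l : ℕ) (x : ℕ →₀ ℝ) (E : Fin (l + 1) → Finset ℕ)
    (hE : Succ E) :
    (1 / f (l + 1)) * ∑ i, normK k (restr x (E i)) ≤ normK (k + 1) x := by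
  have h1 : (1 / f (l + 1)) * ∑ i, normK k (restr x (E i)) =
      (if Succ E then (1 / f (l + 1)) * ∑ i, normK k (restr x (E i)) else 0) :=
    (if_pos hE).symm
  rw [h1]
  show _ ≤ ⨆ l : ℕ, ⨆ E : Fin (l + 1) → Finset ℕ,
      if Succ E then (1 / f (l + 1)) * ∑ i, normK k (restr x (E i)) else 0
  exact le_trans (le_ciSup (bddAbove_inner k l x) E) (le_ciSup (bddAbove_outer k x) l)

lemma f_one : f 1 = 1 := by
  show Real.logb 2 ((1:ℕ) + 1) = 1
  norm_num [Real.logb_self_eq_one]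

lemma Succ_of_subset {l : ℕ} {E F : Fin l → Finset ℕ} (h : Succ E)
    (hsub : ∀ i, F i ⊆ E i) : Succ F := by
  intro i j hij a ha b hb
  exact h i j hij a (hsub i ha) b (hsub j hb)

/-- Restriction does not increase the norms. -/
lemma normK_restr_le (k : ℕ) : ∀ (x : ℕ →₀ ℝ) (A : Finset ℕ),
    normK k (restr x A) ≤ normK k x := by
  induction k with
  | zero =>
    intro x A
    refine ciSup_le fun n => ?_
    have h1 : |restr x A n| ≤ |x n| := by
      rw [restr_apply]
      split_ifs
      · exact le_refl _
      · simp
    refine le_trans h1 ?_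
    exact le_ciSup (⟨L1 x, by rintro _ ⟨m, rfl⟩; exact abs_le_L1 x m⟩ :
      BddAbove (Set.range fun n => |x n|)) n
  | succ k ih =>
    intro x A
    show (⨆ l : ℕ, ⨆ E : Fin (l + 1) → Finset ℕ,
      if Succ E then (1 / f (l + 1)) * ∑ i, normK k (restr (restr x A) (E i)) else 0)
        ≤ normK (k + 1) x
    refine ciSup_le fun l => ciSup_le fun E => ?_
    split_ifs with h
    · have hre : ∀ i, restr (restr x A) (E i) = restr x (E i ∩ A) := fun i =>
        restr_restr x A (E i)
      have hS : Succ (fun i => E i ∩ A) :=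
        Succ_of_subset h (fun i => Finset.inter_subset_left)
      calc (1 / f (l + 1)) * ∑ i, normK k (restr (restr x A) (E i))
          = (1 / f (l + 1)) * ∑ i, normK k (restr x (E i ∩ A)) := by
            congr 1
            exact Finset.sum_congr rfl fun i _ => by rw [hre i]
        _ ≤ normK (k + 1) x := term_le_normK_succ k l x _ hS
    · exact normK_nonneg (k + 1) x

lemma normK_le_succ (k : ℕ) (x : ℕ →₀ ℝ) : normK k x ≤ normK (k + 1) x := by
  have h0 : Succ (fun _ : Fin 1 => x.support) := by
    intro i j hij
    omega
  have := term_le_normK_succ k 0 x (fun _ => x.support) h0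
  simpa [f_one, restr_support_eq] using this

lemma normK_mono (x : ℕ →₀ ℝ) : Monotone fun k => normK k x :=
  monotone_nat_of_le_succ fun k => normK_le_succ k x

lemma bddAbove_normK (x : ℕ →₀ ℝ) : BddAbove (Set.range fun k => normK k x) :=
  ⟨L1 x, by rintro _ ⟨k, rfl⟩; exact normK_le_L1 k x⟩

lemma normK_le_S (k : ℕ) (x : ℕ →₀ ℝ) : normK k x ≤ S x :=
  le_ciSup (bddAbove_normK x) k

lemma S_nonneg (x : ℕ →₀ ℝ) : 0 ≤ S x :=
  le_trans (normK_nonneg 0 x) (normK_le_S 0 x)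

lemma S_le_L1 (x : ℕ →₀ ℝ) : S x ≤ L1 x :=
  ciSup_le fun k => normK_le_L1 k x

lemma rhs_term_le (x : ℕ →₀ ℝ) (l : ℕ) (E : Fin l → Finset ℕ) :
    (if 2 ≤ l ∧ Succ E then (1 / f l) * ∑ i, S (restr x (E i)) else 0) ≤ L1 x := by
  split_ifs with h
  · obtain ⟨hl, hE⟩ := h
    have hsum : ∑ i, S (restr x (E i)) ≤ L1 x :=
      le_trans (Finset.sum_le_sum fun i _ => S_le_L1 _) (sum_L1_restr_le x E hE)
    have hnn : 0 ≤ ∑ i, S (restr x (E i)) :=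
      Finset.sum_nonneg fun i _ => S_nonneg _
    calc (1 / f l) * ∑ i, S (restr x (E i))
        ≤ 1 * ∑ i, S (restr x (E i)) :=
          mul_le_mul_of_nonneg_right (one_div_f_le_one (by omega)) hnn
      _ = _ := one_mul _
      _ ≤ L1 x := hsum
  · exact L1_nonneg x

lemma rhs_bddAbove_inner (x : ℕ →₀ ℝ) (l : ℕ) :
    BddAbove (Set.range fun E : Fin l → Finset ℕ =>
      if 2 ≤ l ∧ Succ E then (1 / f l) * ∑ i, S (restr x (E i)) else 0) :=
  ⟨L1 x, by rintro _ ⟨E, rfl⟩; exact rhs_term_le x l E⟩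

lemma rhs_bddAbove_outer (x : ℕ →₀ ℝ) :
    BddAbove (Set.range fun l : ℕ => ⨆ E : Fin l → Finset ℕ,
      if 2 ≤ l ∧ Succ E then (1 / f l) * ∑ i, S (restr x (E i)) else 0) :=
  ⟨L1 x, by rintro _ ⟨l, rfl⟩; exact ciSup_le fun E => rhs_term_le x l E⟩

lemma sup_abs_nonneg (x : ℕ →₀ ℝ) : 0 ≤ ⨆ n, |x n| := normK_nonneg 0 x

theorem stmt9 (x : ℕ →₀ ℝ) : S x = implicitRHS S x := by
  apply le_antisymm
  · -- S x ≤ RHS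
    refine ciSup_le fun k => ?_
    induction k with
    | zero =>
      exact le_trans (le_refl (normK 0 x)) (le_max_left _ _)
    | succ k ih =>
      show (⨆ l : ℕ, ⨆ E : Fin (l + 1) → Finset ℕ,
        if Succ E then (1 / f (l + 1)) * ∑ i, normK k (restr x (E i)) else 0)
          ≤ implicitRHS S x
      refine ciSup_le fun l => ciSup_le fun E => ?_
      split_ifs with hE
      · match l with
        | 0 =>
          have : (1 / f (0 + 1)) * ∑ i : Fin 1, normK k (restr x (E i)) =
              normK k (restr x (E 0)) := by
            simp [f_one, Fin.sum_univ_one]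
          rw [this]
          exact le_trans (normK_restr_le k x (E 0)) ih
        | m + 1 =>
          have hterm : (1 / f (m + 1 + 1)) * ∑ i, normK k (restr x (E i)) ≤
              (1 / f (m + 1 + 1)) * ∑ i, S (restr x (E i)) := by
            refine mul_le_mul_of_nonneg_left ?_ (le_of_lt (one_div_f_pos (by omega)))
            exact Finset.sum_le_sum fun i _ => normK_le_S k _
          refine le_trans hterm ?_
          refine le_trans ?_ (le_max_right _ _)
          have heq : (1 / f (m + 1 + 1)) * ∑ i, S (restr x (E i)) =
              (if 2 ≤ m + 1 + 1 ∧ Succ E then (1 / f (m + 1 + 1)) * ∑ i, S (restr x (E i))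
                else 0) := (if_pos ⟨by omega, hE⟩).symm
          rw [heq]
          exact le_trans (le_ciSup (rhs_bddAbove_inner x (m + 1 + 1)) E)
            (le_ciSup (rhs_bddAbove_outer x) (m + 1 + 1))
      · exact le_trans (sup_abs_nonneg x) (le_max_left _ _)
  · -- RHS ≤ S x
    refine max_le (normK_le_S 0 x) ?_
    refine ciSup_le fun l => ciSup_le fun E => ?_
    split_ifs with h
    · obtain ⟨hl, hE⟩ := h
      obtain ⟨m, rfl⟩ : ∃ m, l = m + 1 := ⟨l - 1, by omega⟩
      refine le_of_forall_pos_le_add fun ε hε => ?_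
      set δ : ℝ := ε / (m + 1) with hδdef
      have hδ : 0 < δ := div_pos hε (by positivity)
      -- choose levels
      have hexists : ∀ i : Fin (m + 1), ∃ k : ℕ,
          S (restr x (E i)) - δ < normK k (restr x (E i)) := by
        intro i
        have : S (restr x (E i)) - δ < S (restr x (E i)) := by linarith
        exact exists_lt_of_lt_ciSup this
      choose kk hkk using hexists
      set K : ℕ := Finset.univ.sup kk with hK
      have hle : ∀ i : Fin (m + 1), S (restr x (E i)) ≤ normK K (restr x (E i)) + δ := by
        intro i
        have h1 : normK (kk i) (restr x (E i)) ≤ normK K (restr x (E i)) :=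
          normK_mono _ (Finset.le_sup (Finset.mem_univ i))
        have := hkk i
        linarith
      have hsum : ∑ i, S (restr x (E i)) ≤ (∑ i, normK K (restr x (E i))) + (m + 1) * δ := by
        calc ∑ i, S (restr x (E i)) ≤ ∑ i : Fin (m + 1), (normK K (restr x (E i)) + δ) :=
              Finset.sum_le_sum fun i _ => hle i
          _ = (∑ i, normK K (restr x (E i))) + (m + 1) * δ := by
              rw [Finset.sum_add_distrib]
              simp [Finset.card_univ, mul_comm]
      have hmd : ((m : ℝ) + 1) * δ = ε := by
        rw [hδdef]
        field_simp
      have h1f : 0 < 1 / f (m + 1) := one_div_f_pos (by omega)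
      calc (1 / f (m + 1)) * ∑ i, S (restr x (E i))
          ≤ (1 / f (m + 1)) * ((∑ i, normK K (restr x (E i))) + (m + 1) * δ) :=
            mul_le_mul_of_nonneg_left hsum (le_of_lt h1f)
        _ = (1 / f (m + 1)) * (∑ i, normK K (restr x (E i)))
              + (1 / f (m + 1)) * ((m + 1) * δ) := by ring
        _ ≤ normK (K + 1) x + 1 * ((m + 1) * δ) := by
            refine add_le_add ?_ ?_
            · exact term_le_normK_succ K m x E hE
            · refine mul_le_mul_of_nonneg_right (one_div_f_le_one (by omega)) ?_
              positivity
        _ = normK (K + 1) x + ε := by rw [one_mul, hmd]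
        _ ≤ S x + ε := by
            have := normK_le_S (K + 1) x
            linarith
    · exact S_nonneg x
end
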